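/- Suppose Q is concentrated on ℤ₊, i.e. q_j = 0 for j < 0. Then for every k ∈ ℤ₊ the function θ ↦ e^{(1−q₀)θ} CPo(θ,Q;k) is a polynomial in θ of degree at most k. -/

import Mathlib

open MeasureTheory

/-- `n`-fold convolution power `Q^{*n}` of a measure `Q` on `ℝ`; `Q^{*0} = δ₀`. -/
noncomputable def convPow (Q : Measure ℝ) : ℕ → Measure ℝ
  | 0 => Measure.dirac 0
  | n + 1 => Measure.map (fun p : ℝ × ℝ => p.1 + p.2) ((convPow Q n).prod Q)

/-- The compound Poisson distribution
`CPo(θ,Q) = ∑_{n≥0} e^{-θ} θⁿ/n! Q^{*n}`. -/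
noncomputable def CPo (θ : ℝ) (Q : Measure ℝ) : Measure ℝ :=
  Measure.sum fun n : ℕ =>
    ENNReal.ofReal (Real.exp (-θ) * θ ^ n / n.factorial) • convPow Q n

/-! ### Auxiliary pure sequences -/

/-- `aseq q n k` is the discrete `n`-fold convolution power of the weight
sequence `q` evaluated at `k`. -/
noncomputable def aseq (q : ℤ → ENNReal) : ℕ → ℤ → ENNReal
  | 0 => fun k => if k = 0 then 1 else 0
  | n + 1 => fun k => ∑' j : ℤ, aseq q n (k - j) * q j

/-- `bseq q m k` is the discrete `m`-fold convolution power of `q` with the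
mass at `0` removed. -/
noncomputable def bseq (q : ℤ → ENNReal) : ℕ → ℤ → ENNReal
  | 0 => fun k => if k = 0 then 1 else 0
  | m + 1 => fun k => ∑' j : ℤ, bseq q m (k - j) * (if j = 0 then 0 else q j)

lemma bseq_le_one (q : ℤ → ENNReal) (hq1 : ∑' j : ℤ, q j ≤ 1) :
    ∀ m (k : ℤ), bseq q m k ≤ 1 := by
  intro m
  induction m with
  | zero => intro k; simp only [bseq]; split <;> simp
  | succ m ih =>
    intro k
    calc ∑' j : ℤ, bseq q m (k - j) * (if j = 0 then 0 else q j)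
        ≤ ∑' j : ℤ, q j := by
          refine ENNReal.tsum_le_tsum fun j => ?_
          split
          · simp
          · exact (mul_le_mul_left (ih _) _).trans (by simp)
      _ ≤ 1 := hq1

lemma bseq_eq_zero (q : ℤ → ENNReal) (hneg : ∀ j : ℤ, j < 0 → q j = 0) :
    ∀ (m : ℕ) (k : ℤ), k < (m : ℤ) → bseq q m k = 0 := by
  intro m
  induction m with
  | zero => intro k hk; simp only [bseq]; rw [if_neg]; omega
  | succ m ih =>
    intro k hk
    simp only [bseq]
    refine ENNReal.tsum_eq_zero.mpr fun j => ?_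
    rcases lt_trichotomy j 0 with hj | hj | hj
    · rw [if_neg hj.ne, hneg j hj, mul_zero]
    · rw [if_pos hj, mul_zero]
    · rw [ih (k - j) (by omega)]
      simp

/-- Binomial-transform formula expressing `aseq` via `bseq`. -/
lemma aseq_binom (q : ℤ → ENNReal) (n : ℕ) (k : ℤ) :
    aseq q n k = ∑ m ∈ Finset.range (n + 1),
      (n.choose m : ENNReal) * q 0 ^ (n - m) * bseq q m k := by
  induction n generalizing k with
  | zero => simp [aseq, bseq]
  | succ n ih =>
    have key : aseq q (n + 1) k
        = aseq q n k * q 0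
          + ∑' j : ℤ, aseq q n (k - j) * (if j = 0 then 0 else q j) := by
      simp only [aseq]
      rw [ENNReal.tsum_eq_add_tsum_ite (0 : ℤ)]
      congr 1
      · simp
      · refine tsum_congr fun j => ?_
        split <;> simp_all
    rw [key]
    have h1 : aseq q n k * q 0
        = ∑ m ∈ Finset.range (n + 1),
            (n.choose m : ENNReal) * q 0 ^ (n - m + 1) * bseq q m k := by
      rw [ih, Finset.sum_mul]
      refine Finset.sum_congr rfl fun m hm => ?_
      rw [pow_succ]; ring
    have h2 : (∑' j : ℤ, aseq q n (k - j) * (if j = 0 then 0 else q j))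
        = ∑ m ∈ Finset.range (n + 1),
            (n.choose m : ENNReal) * q 0 ^ (n - m) * bseq q (m + 1) k := by
      have : ∀ j : ℤ, aseq q n (k - j) * (if j = 0 then 0 else q j)
          = ∑ m ∈ Finset.range (n + 1),
              (n.choose m : ENNReal) * q 0 ^ (n - m)
                * (bseq q m (k - j) * (if j = 0 then 0 else q j)) := by
        intro j
        rw [ih, Finset.sum_mul]
        refine Finset.sum_congr rfl fun m hm => ?_
        ring
      rw [tsum_congr this, Summable.tsum_finsetSum (fun m _ => ENNReal.summable)]
      refine Finset.sum_congr rfl fun m hm => ?_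
      rw [ENNReal.tsum_mul_left]
      rfl
    rw [h1, h2]
    -- now purely a finite-sum Pascal identity
    have hrhs : ∑ m ∈ Finset.range (n + 2),
          ((n + 1).choose m : ENNReal) * q 0 ^ (n + 1 - m) * bseq q m k
        = (∑ m ∈ Finset.range (n + 1),
            ((n + 1).choose (m + 1) : ENNReal) * q 0 ^ (n - m) * bseq q (m + 1) k)
          + q 0 ^ (n + 1) * bseq q 0 k := by
      rw [Finset.sum_range_succ']
      simp [Nat.succ_sub_succ]
    rw [hrhs]
    have hlhs1 : ∑ m ∈ Finset.range (n + 1),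
          (n.choose m : ENNReal) * q 0 ^ (n - m + 1) * bseq q m k
        = (∑ m ∈ Finset.range (n + 1),
            (n.choose (m + 1) : ENNReal) * q 0 ^ (n - m) * bseq q (m + 1) k)
          + q 0 ^ (n + 1) * bseq q 0 k := by
      rw [Finset.sum_range_succ']
      congr 1
      · rw [Finset.sum_range_succ]
        have : (n.choose (n + 1) : ENNReal) = 0 := by
          simp [Nat.choose_eq_zero_of_lt (Nat.lt_succ_self n)]
        rw [this]
        simp only [zero_mul, mul_zero, add_zero]
        refine Finset.sum_congr rfl fun m hm => ?_
        have hm' : m < n := Finset.mem_range.mp hm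
        have he : n - (m + 1) + 1 = n - m := by omega
        rw [he]
      · simp
    rw [hlhs1]
    rw [add_assoc, add_comm (q 0 ^ (n + 1) * bseq q 0 k), ← add_assoc,
      ← Finset.sum_add_distrib]
    congr 1
    refine Finset.sum_congr rfl fun m hm => ?_
    rw [Nat.choose_succ_succ', Nat.cast_add]
    ring

/-! ### Measure-theoretic reduction -/

section Measures

variable (Q : Measure ℝ) [IsProbabilityMeasure Q]

/-- The set of integers inside `ℝ`. -/
def ZSet : Set ℝ := {x : ℝ | ∃ m : ℤ, (m : ℝ) = x}

lemma ZSet_eq_range : ZSet = Set.range (fun m : ℤ => (m : ℝ)) := by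
  ext x; simp [ZSet, Set.range]

lemma ZSet_countable : ZSet.Countable := by
  rw [ZSet_eq_range]; exact Set.countable_range _

lemma ZSet_measurable : MeasurableSet ZSet :=
  ZSet_countable.measurableSet

instance convPow_prob : ∀ n, IsProbabilityMeasure (convPow Q n)
  | 0 => by rw [convPow]; infer_instance
  | n + 1 => by
    rw [convPow]
    have : IsProbabilityMeasure (convPow Q n) := convPow_prob n
    exact Measure.isProbabilityMeasure_map
      (measurable_fst.add measurable_snd).aemeasurable

lemma convPow_conc (hQ : Q ZSetᶜ = 0) : ∀ n, (convPow Q n) ZSetᶜ = 0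
  | 0 => by
    rw [convPow, Measure.dirac_apply' _ ZSet_measurable.compl]
    have : (0 : ℝ) ∈ ZSet := ⟨0, by norm_num⟩
    simp [Set.indicator, this]
  | n + 1 => by
    rw [convPow,
      Measure.map_apply (f := fun p : ℝ × ℝ => p.1 + p.2) (measurable_fst.add measurable_snd)
        ZSet_measurable.compl]
    have : IsProbabilityMeasure (convPow Q n) := convPow_prob Q n
    have hsub : (fun p : ℝ × ℝ => p.1 + p.2) ⁻¹' ZSetᶜ
        ⊆ (ZSetᶜ ×ˢ Set.univ) ∪ (Set.univ ×ˢ ZSetᶜ) := by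
      intro p hp
      by_contra h
      simp only [Set.mem_union, Set.mem_prod, Set.mem_univ, and_true, true_and,
        Set.mem_compl_iff, not_or, not_not] at h
      obtain ⟨⟨m1, hm1⟩, ⟨m2, hm2⟩⟩ := h
      exact hp ⟨m1 + m2, by push_cast; rw [hm1, hm2]⟩
    refine measure_mono_null hsub ?_
    refine le_antisymm ?_ zero_le
    calc ((convPow Q n).prod Q) ((ZSetᶜ ×ˢ Set.univ) ∪ (Set.univ ×ˢ ZSetᶜ))
        ≤ ((convPow Q n).prod Q) (ZSetᶜ ×ˢ Set.univ)
          + ((convPow Q n).prod Q) (Set.univ ×ˢ ZSetᶜ) := measure_union_le _ _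
      _ = 0 := by
          rw [Measure.prod_prod, Measure.prod_prod, convPow_conc hQ n, hQ]
          simp

/-- Convolution with `Q` of a measure concentrated on the integers, evaluated
at an integer point. -/
lemma conv_singleton (μ : Measure ℝ) [IsProbabilityMeasure μ]
    (hμ : μ ZSetᶜ = 0) (hQc : Q ZSetᶜ = 0) (k : ℤ) :
    Measure.map (fun p : ℝ × ℝ => p.1 + p.2) (μ.prod Q) {(k : ℝ)} =
      ∑' j : ℤ, μ {((k - j : ℤ) : ℝ)} * Q {((j : ℤ) : ℝ)} := by
  rw [Measure.map_apply (f := fun p : ℝ × ℝ => p.1 + p.2) (measurable_fst.add measurable_snd)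
    (measurableSet_singleton _)]
  have hprod : (μ.prod Q) ((ZSet ×ˢ ZSet)ᶜ) = 0 := by
    have hsub : (ZSet ×ˢ ZSet)ᶜ ⊆ (ZSetᶜ ×ˢ Set.univ) ∪ (Set.univ ×ˢ ZSetᶜ) := by
      intro p hp
      simp only [Set.mem_compl_iff, Set.mem_prod, not_and_or] at hp
      rcases hp with h | h
      · exact Or.inl ⟨h, trivial⟩
      · exact Or.inr ⟨trivial, h⟩
    refine measure_mono_null hsub ?_
    refine le_antisymm ?_ zero_le
    calc (μ.prod Q) ((ZSetᶜ ×ˢ Set.univ) ∪ (Set.univ ×ˢ ZSetᶜ))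
        ≤ (μ.prod Q) (ZSetᶜ ×ˢ Set.univ) + (μ.prod Q) (Set.univ ×ˢ ZSetᶜ) :=
          measure_union_le _ _
      _ = 0 := by rw [Measure.prod_prod, Measure.prod_prod, hμ, hQc]; simp
  rw [← measure_inter_conull hprod]
  have hset : ((fun p : ℝ × ℝ => p.1 + p.2) ⁻¹' {(k : ℝ)}) ∩ (ZSet ×ˢ ZSet)
      = ⋃ j : ℤ, {(((k - j : ℤ) : ℝ), ((j : ℤ) : ℝ))} := by
    ext p
    constructor
    · rintro ⟨hsum, ⟨⟨m1, hm1⟩, ⟨m2, hm2⟩⟩⟩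
      simp only [Set.mem_preimage, Set.mem_singleton_iff] at hsum
      have hmk : m1 + m2 = k := by
        have : ((m1 + m2 : ℤ) : ℝ) = (k : ℝ) := by push_cast; rw [hm1, hm2]; exact hsum
        exact_mod_cast this
      refine Set.mem_iUnion.mpr ⟨m2, ?_⟩
      have h1 : ((k - m2 : ℤ) : ℝ) = p.1 := by rw [← hmk]; push_cast; rw [hm1]; ring
      have h2 : ((m2 : ℤ) : ℝ) = p.2 := hm2
      simp only [Set.mem_singleton_iff]
      exact Prod.ext h1.symm h2.symm
    · intro hp
      obtain ⟨j, hj⟩ := Set.mem_iUnion.mp hp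
      simp only [Set.mem_singleton_iff] at hj
      subst hj
      refine ⟨?_, ⟨⟨k - j, rfl⟩, ⟨j, rfl⟩⟩⟩
      simp only [Set.mem_preimage, Set.mem_singleton_iff]
      push_cast
      ring
  rw [hset]
  have hdisj : Pairwise (Function.onFun Disjoint
      fun j : ℤ => ({(((k - j : ℤ) : ℝ), ((j : ℤ) : ℝ))} : Set (ℝ × ℝ))) := by
    intro i j hij
    simp only [Function.onFun, Set.disjoint_singleton]
    intro h
    have h2 : ((i : ℤ) : ℝ) = ((j : ℤ) : ℝ) := congrArg Prod.snd h
    exact hij (by exact_mod_cast h2)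
  rw [measure_iUnion hdisj fun j => measurableSet_singleton _]
  refine tsum_congr fun j => ?_
  rw [← Set.singleton_prod_singleton, Measure.prod_prod]

lemma convPow_singleton (hQc : Q ZSetᶜ = 0) :
    ∀ n (k : ℤ), convPow Q n {(k : ℝ)} = aseq (fun j => Q {(j : ℝ)}) n k
  | 0, k => by
    rw [convPow, Measure.dirac_apply' _ (measurableSet_singleton _)]
    simp only [aseq]
    by_cases hk : k = 0
    · subst hk; simp [Set.indicator]
    · rw [if_neg hk]
      have : (0 : ℝ) ∉ ({(k : ℝ)} : Set ℝ) := by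
        simp only [Set.mem_singleton_iff]
        exact_mod_cast fun h => hk (by exact_mod_cast h.symm)
      simp [Set.indicator, this]
  | n + 1, k => by
    have : IsProbabilityMeasure (convPow Q n) := convPow_prob Q n
    rw [convPow, conv_singleton Q (convPow Q n) (convPow_conc Q hQc n) hQc k]
    simp only [aseq]
    exact tsum_congr fun j => by rw [convPow_singleton hQc n (k - j)]

end Measures

/-- **Polynomial structure of compound Poisson probabilities.**  Suppose `Q` is
concentrated on `ℤ₊`, i.e. `Q` is concentrated on `ℤ` and `q_j = 0` for `j < 0`.
Then for every `k ∈ ℤ₊` the map `θ ↦ e^{(1-q₀)θ} CPo(θ,Q;k)` is a polynomial in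
`θ` of degree at most `k`. -/
theorem compoundPoisson_polynomial
    (Q : Measure ℝ) [IsProbabilityMeasure Q]
    (hQ : Q {x : ℝ | ∃ m : ℤ, (m : ℝ) = x} = 1)
    (hQpos : ∀ j : ℤ, j < 0 → Q {(j : ℝ)} = 0) (k : ℕ) :
    ∃ p : Polynomial ℝ, p.degree ≤ k ∧
      ∀ θ : ℝ, 0 ≤ θ →
        Real.exp ((1 - (Q {(0 : ℝ)}).toReal) * θ) *
            (CPo θ Q {((k : ℤ) : ℝ)}).toReal = p.eval θ := by
  classical
  have hQc : Q ZSetᶜ = 0 := by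
    rw [prob_compl_eq_zero_iff ZSet_measurable]; exact hQ
  set q : ℤ → ENNReal := fun j => Q {(j : ℝ)} with hq
  have hq1 : ∑' j : ℤ, q j ≤ 1 := by
    have hd : Pairwise (Function.onFun Disjoint
        fun j : ℤ => ({((j : ℤ) : ℝ)} : Set ℝ)) := by
      intro i j hij
      simp only [Function.onFun, Set.disjoint_singleton]
      exact_mod_cast hij
    calc ∑' j : ℤ, q j
        = Q (⋃ j : ℤ, {((j : ℤ) : ℝ)}) :=
          (measure_iUnion hd fun _ => measurableSet_singleton _).symm
      _ ≤ 1 := prob_le_one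
  have hqle : ∀ j, q j ≤ 1 := fun j => prob_le_one
  have hq0top : q 0 ≠ ⊤ := (lt_of_le_of_lt (hqle 0) ENNReal.one_lt_top).ne
  have hneg : ∀ j : ℤ, j < 0 → q j = 0 := hQpos
  set c : ℝ := (Q {(0 : ℝ)}).toReal with hcdef
  have hq0c : (q 0).toReal = c := by
    simp only [hq, Int.cast_zero, hcdef]
  have hc0 : 0 ≤ c := ENNReal.toReal_nonneg
  have hc1 : c ≤ 1 := by
    rw [hcdef]
    simpa using ENNReal.toReal_mono ENNReal.one_ne_top
      (prob_le_one : Q {(0 : ℝ)} ≤ 1)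
  set B : ℕ → ℝ := fun m => (bseq q m (k : ℤ)).toReal with hBdef
  have hBfin : ∀ m, bseq q m (k : ℤ) ≠ ⊤ :=
    fun m => (lt_of_le_of_lt (bseq_le_one q hq1 m _) ENNReal.one_lt_top).ne
  have hB0 : ∀ m, 0 ≤ B m := fun m => ENNReal.toReal_nonneg
  have hB1 : ∀ m, B m ≤ 1 := fun m => by
    simpa using ENNReal.toReal_mono ENNReal.one_ne_top (bseq_le_one q hq1 m _)
  have hBz : ∀ m : ℕ, (k : ℤ) < (m : ℤ) → B m = 0 := fun m hm => by
    simp only [hBdef, bseq_eq_zero q hneg m _ hm, ENNReal.toReal_zero]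
  refine ⟨∑ m ∈ Finset.range (k + 1),
      Polynomial.C (B m / m.factorial) * Polynomial.X ^ m, ?_, ?_⟩
  · refine (Polynomial.degree_sum_le _ _).trans ?_
    refine Finset.sup_le fun m hm => ?_
    refine (Polynomial.degree_mul_le _ _).trans ?_
    have h2 : (Polynomial.X ^ m : Polynomial ℝ).degree ≤ (m : WithBot ℕ) :=
      Polynomial.degree_X_pow_le m
    have hmk : m ≤ k := Nat.lt_succ_iff.mp (Finset.mem_range.mp hm)
    calc (Polynomial.C (B m / m.factorial)).degree
          + (Polynomial.X ^ m : Polynomial ℝ).degree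
        ≤ 0 + (m : WithBot ℕ) := add_le_add Polynomial.degree_C_le h2
      _ = (m : WithBot ℕ) := zero_add _
      _ ≤ (k : WithBot ℕ) := by exact_mod_cast hmk
  intro θ hθ
  -- Step 1: value of the CPo measure of the singleton
  have hCPo : (CPo θ Q {((k : ℤ) : ℝ)}).toReal
      = ∑' n : ℕ, (Real.exp (-θ) * θ ^ n / n.factorial) * (aseq q n (k : ℤ)).toReal := by
    rw [CPo, Measure.sum_apply _ (measurableSet_singleton _)]
    simp only [Measure.smul_apply, smul_eq_mul]
    rw [ENNReal.tsum_toReal_eq]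
    · refine tsum_congr fun n => ?_
      rw [ENNReal.toReal_mul, ENNReal.toReal_ofReal (by positivity),
        convPow_singleton Q hQc n (k : ℤ)]
    · intro n
      exact ENNReal.mul_ne_top ENNReal.ofReal_ne_top
        (lt_of_le_of_lt prob_le_one ENNReal.one_lt_top).ne
  -- Step 2: binomial expansion of `aseq` in real numbers
  have hA : ∀ n : ℕ, (aseq q n (k : ℤ)).toReal
      = ∑ m ∈ Finset.range (k + 1), (n.choose m : ℝ) * c ^ (n - m) * B m := by
    intro n
    have hstep : (aseq q n (k : ℤ)).toReal
        = ∑ m ∈ Finset.range (n + 1), (n.choose m : ℝ) * c ^ (n - m) * B m := by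
      rw [aseq_binom q n (k : ℤ), ENNReal.toReal_sum]
      · refine Finset.sum_congr rfl fun m _ => ?_
        rw [ENNReal.toReal_mul, ENNReal.toReal_mul, ENNReal.toReal_pow,
          ENNReal.toReal_natCast, hq0c]
      · intro m _
        exact ENNReal.mul_ne_top (ENNReal.mul_ne_top (ENNReal.natCast_ne_top _)
          (ENNReal.pow_ne_top hq0top)) (hBfin m)
    rw [hstep]
    rw [show ∑ m ∈ Finset.range (n + 1), (n.choose m : ℝ) * c ^ (n - m) * B m
        = ∑ m ∈ Finset.range (max n k + 1), (n.choose m : ℝ) * c ^ (n - m) * B m from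
      Finset.sum_subset
        (by intro m hm; simp only [Finset.mem_range] at *; omega)
        (fun m hm hmn => by
          have hlt : n < m := by simp only [Finset.mem_range] at *; omega
          simp [Nat.choose_eq_zero_of_lt hlt])]
    exact (Finset.sum_subset
      (by intro m hm; simp only [Finset.mem_range] at *; omega)
      (fun m hm hmk => by
        have hlt : k < m := by simp only [Finset.mem_range] at *; omega
        rw [hBz m (by exact_mod_cast hlt)]; ring)).symm
  -- choose bound
  have hch : ∀ n m : ℕ, (n.choose m : ℝ) ≤ 2 ^ n := by
    intro n m
    have h : n.choose m ≤ 2 ^ n := by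
      rcases le_or_gt m n with h | h
      · calc n.choose m ≤ ∑ i ∈ Finset.range (n + 1), n.choose i :=
            Finset.single_le_sum (fun i _ => Nat.zero_le _)
              (Finset.mem_range.mpr (by omega))
          _ = 2 ^ n := Nat.sum_range_choose n
      · simp [Nat.choose_eq_zero_of_lt h]
    exact_mod_cast h
  -- summability of the double sum columns
  have hnonneg : ∀ m n : ℕ,
      0 ≤ (Real.exp (-θ) * θ ^ n / n.factorial) * ((n.choose m : ℝ) * c ^ (n - m) * B m) := by
    intro m n
    have := hB0 m
    positivity
  have hbound : ∀ m n : ℕ,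
      (Real.exp (-θ) * θ ^ n / n.factorial) * ((n.choose m : ℝ) * c ^ (n - m) * B m)
        ≤ (2 * θ) ^ n / n.factorial := by
    intro m n
    have e1 : Real.exp (-θ) ≤ 1 := by
      rw [← Real.exp_zero]; exact Real.exp_le_exp.mpr (by linarith)
    have e2 : c ^ (n - m) ≤ 1 := pow_le_one₀ hc0 hc1
    have e4 := hch n m
    have hfac : Real.exp (-θ) * ((n.choose m : ℝ) * c ^ (n - m) * B m) ≤ 2 ^ n := by
      calc Real.exp (-θ) * ((n.choose m : ℝ) * c ^ (n - m) * B m)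
          ≤ 1 * ((2 : ℝ) ^ n * 1 * 1) := by
            refine mul_le_mul e1 ?_ ?_ zero_le_one
            · refine mul_le_mul ?_ (hB1 m) (hB0 m) (by positivity)
              exact mul_le_mul e4 e2 (by positivity) (by positivity)
            · have := hB0 m; positivity
        _ = 2 ^ n := by ring
    calc (Real.exp (-θ) * θ ^ n / n.factorial) * ((n.choose m : ℝ) * c ^ (n - m) * B m)
        = (Real.exp (-θ) * ((n.choose m : ℝ) * c ^ (n - m) * B m)) * (θ ^ n / n.factorial) := by
          ring
      _ ≤ 2 ^ n * (θ ^ n / n.factorial) := by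
          refine mul_le_mul_of_nonneg_right hfac (by positivity)
      _ = (2 * θ) ^ n / n.factorial := by rw [mul_pow]; ring
  have hsummable : ∀ m ∈ Finset.range (k + 1), Summable fun n : ℕ =>
      (Real.exp (-θ) * θ ^ n / n.factorial) * ((n.choose m : ℝ) * c ^ (n - m) * B m) := by
    intro m _
    exact Summable.of_nonneg_of_le (hnonneg m) (hbound m)
      (Real.summable_pow_div_factorial (2 * θ))
  -- inner sums
  have hinner : ∀ m ∈ Finset.range (k + 1),
      (∑' n : ℕ, (Real.exp (-θ) * θ ^ n / n.factorial)
          * ((n.choose m : ℝ) * c ^ (n - m) * B m))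
        = Real.exp (-θ) * Real.exp (c * θ) * (B m * θ ^ m / m.factorial) := by
    intro m hm
    have hsumm := hsummable m hm
    have hzero : ∀ i ∈ Finset.range m,
        (Real.exp (-θ) * θ ^ i / i.factorial) * ((i.choose m : ℝ) * c ^ (i - m) * B m) = 0 := by
      intro i hi
      have : i < m := Finset.mem_range.mp hi
      simp [Nat.choose_eq_zero_of_lt this]
    have hshift := Summable.sum_add_tsum_nat_add m hsumm
    rw [← hshift, Finset.sum_eq_zero hzero, zero_add]
    have hterm : ∀ i : ℕ,
        (Real.exp (-θ) * θ ^ (i + m) / (i + m).factorial)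
            * (((i + m).choose m : ℝ) * c ^ (i + m - m) * B m)
          = (Real.exp (-θ) * Real.exp (c * θ) * (B m * θ ^ m / m.factorial))
              * (Real.exp (c * θ))⁻¹ * ((c * θ) ^ i / i.factorial) := by
      intro i
      have hfact : (((i + m).choose m : ℝ)) * i.factorial * m.factorial
          = (i + m).factorial := by
        exact_mod_cast congrArg (Nat.cast : ℕ → ℝ)
          (Nat.add_choose_mul_factorial_mul_factorial i m)
      have hne1 : (i.factorial : ℝ) ≠ 0 := by positivity
      have hne2 : (m.factorial : ℝ) ≠ 0 := by positivity
      have hne3 : ((i + m).factorial : ℝ) ≠ 0 := by positivity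
      have hexpne : Real.exp (c * θ) ≠ 0 := (Real.exp_pos _).ne'
      rw [Nat.add_sub_cancel]
      field_simp
      rw [← hfact]
      ring
    rw [tsum_congr hterm, tsum_mul_left]
    have hexp : ∑' i : ℕ, (c * θ) ^ i / i.factorial = Real.exp (c * θ) := by
      rw [Real.exp_eq_exp_ℝ, NormedSpace.exp_eq_tsum_div]
    rw [hexp]
    field_simp
  -- assemble
  have hre : (∑' n : ℕ, (Real.exp (-θ) * θ ^ n / n.factorial) * (aseq q n (k : ℤ)).toReal)
      = Real.exp (-θ) * Real.exp (c * θ)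
          * ∑ m ∈ Finset.range (k + 1), B m * θ ^ m / m.factorial := by
    have h1 : ∀ n : ℕ, (Real.exp (-θ) * θ ^ n / n.factorial) * (aseq q n (k : ℤ)).toReal
        = ∑ m ∈ Finset.range (k + 1),
            (Real.exp (-θ) * θ ^ n / n.factorial) * ((n.choose m : ℝ) * c ^ (n - m) * B m) := by
      intro n; rw [hA n, Finset.mul_sum]
    rw [tsum_congr h1, Summable.tsum_finsetSum hsummable, Finset.sum_congr rfl hinner, ← Finset.mul_sum]
  rw [hCPo, hre]
  have heval : Polynomial.eval θ (∑ m ∈ Finset.range (k + 1),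
        Polynomial.C (B m / m.factorial) * Polynomial.X ^ m)
      = ∑ m ∈ Finset.range (k + 1), B m * θ ^ m / m.factorial := by
    rw [Polynomial.eval_finset_sum]
    refine Finset.sum_congr rfl fun m _ => ?_
    simp only [Polynomial.eval_mul, Polynomial.eval_C, Polynomial.eval_pow,
      Polynomial.eval_X]
    ring
  rw [heval]
  calc Real.exp ((1 - c) * θ)
        * (Real.exp (-θ) * Real.exp (c * θ)
            * ∑ m ∈ Finset.range (k + 1), B m * θ ^ m / m.factorial)
      = Real.exp ((1 - c) * θ + -θ + c * θ)
          * ∑ m ∈ Finset.range (k + 1), B m * θ ^ m / m.factorial := by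
        rw [Real.exp_add, Real.exp_add]; ring
    _ = ∑ m ∈ Finset.range (k + 1), B m * θ ^ m / m.factorial := by
        rw [show (1 - c) * θ + -θ + c * θ = 0 by ring, Real.exp_zero, one_mul]
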